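/- For every integer Δ ≥ Δ₀ (for some absolute constant Δ₀) and every n ≥ 5Δ log Δ, every bipartite graph with parts A, B of size n in which every vertex of A has degree at most Δ contains a bi-hole of size at least (log Δ / (2Δ)) · n. -/

import Mathlib

/-!
Averaging over the `k`-subsets `Y` of `B`: a vertex of `A` misses all of `Y` for a fraction
`C(n - Δ, k) / C(n, k) ≥ exp (-Δk / (n - k - Δ))` of them, so some `Y` is missed by at least
`n exp (-Δk / (n - k - Δ))` vertices of `A`. For `k = ⌈n log Δ / (2Δ)⌉` the exponent is about
`(log Δ) / 2` while `n / k ≈ 2Δ / log Δ`, so this is at least `k` once `Δ` is large.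
-/

open Finset Real
open scoped Nat

def BiHole (n k : ℕ) (G : Fin n → Fin n → Prop) : Prop :=
  ∃ X Y : Finset (Fin n), X.card = k ∧ Y.card = k ∧
    ∀ a ∈ X, ∀ b ∈ Y, ¬ G a b

noncomputable def degA {n : ℕ} (G : Fin n → Fin n → Prop) (a : Fin n) : ℕ :=
  Nat.card {b : Fin n // G a b}

theorem degA_eq_card_filter {n : ℕ} (G : Fin n → Fin n → Prop) [DecidableRel G] (a : Fin n) :
    degA G a = #{b | G a b} := by
  simp [degA, Nat.card_eq_fintype_card, Fintype.card_subtype]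

theorem card_powersetCard_filter_nonadj {n : ℕ} (G : Fin n → Fin n → Prop) [DecidableRel G]
    (k : ℕ) (a : Fin n) :
    #{Y ∈ powersetCard k (univ : Finset (Fin n)) | ∀ b ∈ Y, ¬ G a b} =
      (n - degA G a).choose k := by
  have hfilter : {Y ∈ powersetCard k (univ : Finset (Fin n)) | ∀ b ∈ Y, ¬ G a b} =
      powersetCard k {b | ¬ G a b} := by
    ext Y
    simp only [mem_filter, mem_powersetCard, subset_iff, mem_univ, true_and]
    tauto
  rw [hfilter, card_powersetCard, degA_eq_card_filter, ← compl_filter, card_compl,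
    Fintype.card_fin]

theorem biHole_of_card_mul_choose_le {n Δ k : ℕ} (G : Fin n → Fin n → Prop)
    (hdeg : ∀ a, degA G a ≤ Δ) (hkn : k ≤ n)
    (hcount : k * n.choose k ≤ n * (n - Δ).choose k) : BiHole n k G := by
  classical
  set S := powersetCard k (univ : Finset (Fin n))
  have hdouble : ∑ Y ∈ S, k ≤ ∑ Y ∈ S, #{a | ∀ b ∈ Y, ¬ G a b} := by
    calc ∑ Y ∈ S, k = k * n.choose k := by simp [S, mul_comm]
      _ ≤ n * (n - Δ).choose k := hcount
      _ = ∑ _a : Fin n, (n - Δ).choose k := by simp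
      _ ≤ ∑ a : Fin n, (n - degA G a).choose k :=
          sum_le_sum fun a _ => Nat.choose_le_choose _ (Nat.sub_le_sub_left (hdeg a) n)
      _ = ∑ Y ∈ S, #{a | ∀ b ∈ Y, ¬ G a b} := by
          simp only [← card_powersetCard_filter_nonadj G k, card_filter]
          exact sum_comm
  have hS : S.Nonempty := by simpa [S] using hkn
  obtain ⟨Y, hYS, hY⟩ := exists_le_of_sum_le hS hdouble
  obtain ⟨X, hXY, hX⟩ := exists_subset_card_eq hY
  exact ⟨X, Y, hX, (mem_powersetCard.1 hYS).2, fun a ha b hb => (mem_filter.1 (hXY ha)).2 b hb⟩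

theorem choose_mul_descFactorial_sub {n k Δ : ℕ} (h : k + Δ ≤ n) :
    n.choose k * (n - k).descFactorial Δ = (n - Δ).choose k * n.descFactorial Δ := by
  refine Nat.eq_of_mul_eq_mul_right (by positivity : 0 < k ! * (n - k - Δ)!) ?_
  calc n.choose k * (n - k).descFactorial Δ * (k ! * (n - k - Δ)!)
      = n.choose k * k ! * ((n - k - Δ)! * (n - k).descFactorial Δ) := by ring
    _ = n ! := by
      rw [Nat.factorial_mul_descFactorial (by omega),
        Nat.choose_mul_factorial_mul_factorial (by omega)]
    _ = (n - Δ).choose k * k ! * (n - Δ - k)! * n.descFactorial Δ := by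
      rw [Nat.choose_mul_factorial_mul_factorial (by omega),
        Nat.factorial_mul_descFactorial (by omega)]
    _ = (n - Δ).choose k * n.descFactorial Δ * (k ! * (n - k - Δ)!) := by
      rw [show n - Δ - k = n - k - Δ by omega]; ring

theorem add_le_mul_exp_div {a b : ℝ} (ha : 0 < a) : a + b ≤ a * exp (b / a) := by
  calc a + b = a * (b / a + 1) := by field_simp; ring
    _ ≤ a * exp (b / a) := by gcongr; exact add_one_le_exp _

theorem descFactorial_le_exp_mul_descFactorial_sub {n k Δ : ℕ} (h : k + Δ < n) :
    (n.descFactorial Δ : ℝ) ≤ exp (Δ * k / (n - k - Δ)) * (n - k).descFactorial Δ := by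
  have hgap : (0 : ℝ) < n - k - Δ := by
    have : ((k + Δ : ℕ) : ℝ) < n := by exact_mod_cast h
    push_cast at this; linarith
  have hfactor : ∀ i ∈ range Δ,
      ((n - i : ℕ) : ℝ) ≤ exp (k / (n - k - Δ)) * ((n - k - i : ℕ) : ℝ) := by
    intro i hi
    have hi : i < Δ := mem_range.1 hi
    have hi' : (i : ℝ) < Δ := by exact_mod_cast hi
    rw [Nat.cast_sub (by omega), Nat.cast_sub (by omega), Nat.cast_sub (by omega)]
    calc (n : ℝ) - i = (n - k - i) + k := by ring
      _ ≤ (n - k - i) * exp (k / (n - k - i)) := add_le_mul_exp_div (by linarith)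
      _ ≤ (n - k - i) * exp (k / (n - k - Δ)) := by gcongr; linarith
      _ = _ := mul_comm _ _
  rw [Nat.descFactorial_eq_prod_range, Nat.descFactorial_eq_prod_range, Nat.cast_prod,
    Nat.cast_prod]
  calc ∏ i ∈ range Δ, ((n - i : ℕ) : ℝ)
      ≤ ∏ i ∈ range Δ, (exp (k / (n - k - Δ)) * ((n - k - i : ℕ) : ℝ)) :=
        prod_le_prod (fun _ _ => Nat.cast_nonneg _) hfactor
    _ = exp (Δ * k / (n - k - Δ)) * ∏ i ∈ range Δ, ((n - k - i : ℕ) : ℝ) := by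
        rw [prod_mul_distrib, prod_const, card_range, ← exp_nat_mul, mul_div_assoc]

theorem card_mul_choose_le_of_mul_exp_le {n k Δ : ℕ} (h : k + Δ < n)
    (hexp : (k : ℝ) * exp (Δ * k / (n - k - Δ)) ≤ n) :
    k * n.choose k ≤ n * (n - Δ).choose k := by
  have hpos : (0 : ℝ) < (n - k).descFactorial Δ := by
    exact_mod_cast Nat.descFactorial_pos.2 (by omega)
  have hid : (n.choose k * (n - k).descFactorial Δ : ℝ) =
      (n - Δ).choose k * n.descFactorial Δ := by
    exact_mod_cast choose_mul_descFactorial_sub h.le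
  rw [← @Nat.cast_le ℝ]
  push_cast
  refine le_of_mul_le_mul_right ?_ hpos
  calc (k : ℝ) * n.choose k * (n - k).descFactorial Δ
      = k * ((n - Δ).choose k * n.descFactorial Δ) := by rw [mul_assoc, hid]
    _ ≤ k * ((n - Δ).choose k * (exp (Δ * k / (n - k - Δ)) * (n - k).descFactorial Δ)) := by
        gcongr; exact descFactorial_le_exp_mul_descFactorial_sub h
    _ = (n - Δ).choose k * (k * exp (Δ * k / (n - k - Δ))) * (n - k).descFactorial Δ := by ring
    _ ≤ (n - Δ).choose k * n * (n - k).descFactorial Δ := by gcongr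
    _ = n * (n - Δ).choose k * (n - k).descFactorial Δ := by ring

theorem add_lt_and_mul_exp_le {D N K : ℝ} (hD : 0 < D) (hL : 100 ≤ log D) (hN : 5 * D * log D ≤ N)
    (hK0 : 0 ≤ K) (hK : K ≤ log D / (2 * D) * N + 1) :
    K + D < N ∧ K * exp (D * K / (N - K - D)) ≤ N := by
  obtain ⟨L, rfl⟩ : ∃ L, D = exp L := ⟨log D, (exp_log hD).symm⟩
  rw [log_exp] at hL hN hK
  have hquad : ∀ x, 0 ≤ x → x ^ 2 / 2 ≤ exp x := fun x hx => by
    nlinarith [quadratic_le_exp_of_nonneg hx]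
  have hDL : 50 * L ≤ exp L := by nlinarith [hquad L (by linarith)]
  have hDN : 500 * exp L ≤ N := by nlinarith
  have hKD : K * exp L ≤ 51 / 100 * L * N := by
    have h : K * exp L ≤ L * N / 2 + exp L := by
      calc K * exp L ≤ (L / (2 * exp L) * N + 1) * exp L := by gcongr
        _ = L * N / 2 + exp L := by field_simp
    nlinarith
  have hKN : K ≤ N / 90 := by nlinarith
  have hgap : 98 / 100 * N ≤ N - K - exp L := by linarith
  refine ⟨by linarith, ?_⟩
  have hexponent : exp L * K / (N - K - exp L) ≤ 52 / 100 * L := by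
    rw [div_le_iff₀ (by linarith)]; nlinarith
  have hlog : L ≤ exp (48 / 100 * L) := by nlinarith [hquad (48 / 100 * L) (by linarith)]
  calc K * exp (exp L * K / (N - K - exp L)) ≤ K * exp (52 / 100 * L) := by gcongr
    _ ≤ N := by
      refine le_of_mul_le_mul_right ?_ (exp_pos (48 / 100 * L))
      calc K * exp (52 / 100 * L) * exp (48 / 100 * L) = K * exp L := by
            rw [mul_assoc, ← exp_add]; ring_nf
        _ ≤ 51 / 100 * L * N := hKD
        _ ≤ N * exp (48 / 100 * L) := by nlinarith

/-- there is an absolute constant `Δ₀` such that for every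
`Δ ≥ Δ₀` and every `n ≥ 5Δ log Δ`, every `n × n` bipartite graph with
one-sided maximum degree at most `Δ` contains a bi-hole of size at least
`(log Δ / (2Δ)) n`. -/
theorem bihole_lower_bound :
    ∃ Δ₀ : ℕ, ∀ Δ : ℕ, Δ₀ ≤ Δ → ∀ n : ℕ,
      5 * (Δ : ℝ) * Real.log Δ ≤ n →
      ∀ G : Fin n → Fin n → Prop, (∀ a, degA G a ≤ Δ) →
        ∃ k : ℕ, Real.log Δ / (2 * Δ) * n ≤ (k : ℝ) ∧ BiHole n k G := by
  refine ⟨⌈exp 100⌉₊, fun Δ hΔ n hn G hdeg => ?_⟩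
  have hΔpos : (0 : ℝ) < Δ := (exp_pos 100).trans_le (Nat.ceil_le.1 hΔ)
  have hL : 100 ≤ log Δ := (le_log_iff_exp_le hΔpos).2 (Nat.ceil_le.1 hΔ)
  set k := ⌈log Δ / (2 * Δ) * n⌉₊
  have hk : (k : ℝ) ≤ log Δ / (2 * Δ) * n + 1 :=
    (Nat.ceil_lt_add_one (by positivity)).le
  obtain ⟨hlt, hexp⟩ := add_lt_and_mul_exp_le hΔpos hL hn (Nat.cast_nonneg k) hk
  have hlt : k + Δ < n := by exact_mod_cast hlt
  exact ⟨k, Nat.le_ceil _, biHole_of_card_mul_choose_le G hdeg (by omega)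
    (card_mul_choose_le_of_mul_exp_le hlt hexp)⟩
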